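/- arXiv:2408.06330 — 4 statements merged into one kernel-verified Lean document; each statement's English description precedes it below -/
import Mathlib

section
/- For every e ∈ E and every x ∈ X, one has x + e ≠ 0 and φ_e(x) ∈ X; that is, each map φ_e maps X into itself. -/
/-- The alphabet of the `n`-dimensional continued fraction system: vectors whose first
coordinate is a positive integer and whose remaining coordinates are integers. -/
def cfAlphabet (n : ℕ) [NeZero n] : Set (EuclideanSpace ℝ (Fin n)) :=
  {e | (∃ k : ℕ, 0 < k ∧ e 0 = k) ∧ ∀ i : Fin n, i ≠ 0 → ∃ m : ℤ, e i = m}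

/-- The center `v_{1/2} = (1/2, 0, …, 0)`. -/
noncomputable def cfCenter (n : ℕ) [NeZero n] : EuclideanSpace ℝ (Fin n) :=
  WithLp.toLp 2 (fun i => if i = 0 then (1/2 : ℝ) else 0)

/-- The generator `φ_e(x) = (x + e)/|x + e|²`. -/
noncomputable def cfMap {n : ℕ} (e : EuclideanSpace ℝ (Fin n)) (x : EuclideanSpace ℝ (Fin n)) :
    EuclideanSpace ℝ (Fin n) :=
  (‖x + e‖ ^ 2)⁻¹ • (x + e)

/-!
The closed ball `B̄(v, ‖v‖)` through the origin is `{y | ‖y‖² ≤ 2⟪y, v⟫}`, and the inversion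
`y ↦ y / ‖y‖²` maps the half-space `{y | 1/2 ≤ ⟪y, v⟫}` into it, since for `z = y / ‖y‖²` one has
`‖z‖² = 1 / ‖y‖²` and `2⟪z, v⟫ = 2⟪y, v⟫ / ‖y‖²`. For `v = v_{1/2}` the half-space is
`{y | 1 ≤ y₀}`, and it contains `x + e`, because `x₀ ≥ ‖x‖² ≥ 0` on `X` and `e₀ ≥ 1`.
-/

open RealInnerProductSpace

section InnerProductSpace

variable {F : Type*} [NormedAddCommGroup F] [InnerProductSpace ℝ F]

theorem norm_sub_le_norm_iff_sq_le_inner (y v : F) :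
    ‖y - v‖ ≤ ‖v‖ ↔ ‖y‖ ^ 2 ≤ 2 * ⟪y, v⟫ := by
  rw [← pow_le_pow_iff_left₀ (norm_nonneg _) (norm_nonneg _) two_ne_zero, norm_sub_sq_real]
  constructor <;> intro h <;> linarith

theorem norm_inv_sq_smul_sub_le_norm {y v : F} (hy : 1 / 2 ≤ ⟪y, v⟫) :
    ‖(‖y‖ ^ 2)⁻¹ • y - v‖ ≤ ‖v‖ := by
  have hy0 : y ≠ 0 := ne_of_apply_ne (⟪·, v⟫) (by simp only [inner_zero_left]; linarith)
  have hr : 0 < ‖y‖ ^ 2 := by positivity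
  rw [norm_sub_le_norm_iff_sq_le_inner, norm_smul, real_inner_smul_left, mul_pow,
    Real.norm_eq_abs, sq_abs, inv_pow, sq (‖y‖ ^ 2), mul_inv, mul_assoc, inv_mul_cancel₀ hr.ne',
    mul_one, mul_left_comm]
  exact le_mul_of_one_le_right (inv_pos.mpr hr).le (by linarith)

end InnerProductSpace

theorem inner_cfCenter {n : ℕ} [NeZero n] (y : EuclideanSpace ℝ (Fin n)) :
    ⟪y, cfCenter n⟫ = y 0 / 2 := by
  rw [PiLp.inner_apply, Finset.sum_eq_single 0 (fun i _ hi => by simp [cfCenter, hi]) (by simp)]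
  simp [cfCenter, div_eq_mul_inv, mul_comm]

theorem norm_cfCenter {n : ℕ} [NeZero n] : ‖cfCenter n‖ = 1 / 2 := by
  have h : ‖cfCenter n‖ ^ 2 = (1 / 2) ^ 2 := by
    rw [← real_inner_self_eq_norm_sq, inner_cfCenter]
    norm_num [cfCenter]
  exact (pow_left_inj₀ (norm_nonneg _) (by norm_num) two_ne_zero).mp h

theorem cfMap_mapsTo_ball_general {n : ℕ} [NeZero n]
    (e : EuclideanSpace ℝ (Fin n)) (he : e ∈ cfAlphabet n)
    (x : EuclideanSpace ℝ (Fin n)) (hx : ‖x - cfCenter n‖ ≤ 1/2) :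
    x + e ≠ 0 ∧ ‖cfMap e x - cfCenter n‖ ≤ 1/2 := by
  obtain ⟨⟨k, hk, hek⟩, -⟩ := he
  have he0 : (1 : ℝ) ≤ e 0 := hek ▸ Nat.one_le_cast.mpr hk
  rw [← norm_cfCenter (n := n), norm_sub_le_norm_iff_sq_le_inner, inner_cfCenter] at hx
  have hx0 : 0 ≤ x 0 := by nlinarith [sq_nonneg ‖x‖]
  have hxe : 1 / 2 ≤ ⟪x + e, cfCenter n⟫ := by
    rw [inner_cfCenter, PiLp.add_apply]
    linarith
  exact ⟨ne_of_apply_ne (⟪·, cfCenter n⟫) (by simp only [inner_zero_left]; linarith),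
    norm_cfCenter (n := n) ▸ norm_inv_sq_smul_sub_le_norm hxe⟩

/-- For every `e ∈ E` and every `x ∈ X = B̄(v_{1/2}, 1/2)`, one has `x + e ≠ 0` and
`φ_e(x) ∈ X`; that is, each `φ_e` maps `X` into itself. -/
theorem cfMap_mapsTo_ball {n : ℕ} [NeZero n] (hn : 2 ≤ n)
    (e : EuclideanSpace ℝ (Fin n)) (he : e ∈ cfAlphabet n)
    (x : EuclideanSpace ℝ (Fin n)) (hx : ‖x - cfCenter n‖ ≤ 1/2) :
    x + e ≠ 0 ∧ ‖cfMap e x - cfCenter n‖ ≤ 1/2 :=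
  cfMap_mapsTo_ball_general e he x hx
end

section
/- For any two distinct elements e₁, e₂ ∈ E, the images of the interior of X under φ_{e₁} and φ_{e₂} are disjoint: φ_{e₁}(Int(X)) ∩ φ_{e₂}(Int(X)) = ∅. -/
open EuclideanGeometry Metric

theorem dist_lt_of_mem_ball_of_mem_ball {X : Type*} [PseudoMetricSpace X] {c x y : X} {r : ℝ}
    (hx : x ∈ ball c r) (hy : y ∈ ball c r) : dist x y < 2 * r := by
  rw [mem_ball] at hx hy
  linarith [dist_triangle_right x y c]

theorem PiLp.one_le_dist_of_int_coords {p : ENNReal} [Fact (1 ≤ p)] {ι : Type*} [Fintype ι]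
    {u v : PiLp p fun _ : ι => ℝ} (hu : ∀ i, ∃ m : ℤ, u i = m) (hv : ∀ i, ∃ m : ℤ, v i = m)
    (hne : u ≠ v) : 1 ≤ dist u v := by
  obtain ⟨i, hi⟩ : ∃ i, u i ≠ v i := by
    by_contra! h
    exact hne (PiLp.ext h)
  obtain ⟨a, ha⟩ := hu i
  obtain ⟨b, hb⟩ := hv i
  rw [ha, hb, Ne, Int.cast_inj] at hi
  calc (1 : ℝ) ≤ dist a b := Int.pairwise_one_le_dist hi
    _ = dist (u i) (v i) := by rw [ha, hb, Int.dist_cast_real]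
    _ ≤ dist u v := PiLp.dist_apply_le u v i

theorem cfMap_eq_inversion {n : ℕ} (e x : EuclideanSpace ℝ (Fin n)) :
    cfMap e x = inversion 0 1 (x + e) := by
  simp [cfMap, inversion]

theorem cfMap_eq_cfMap_iff {n : ℕ} {e₁ e₂ x y : EuclideanSpace ℝ (Fin n)} :
    cfMap e₁ x = cfMap e₂ y ↔ x + e₁ = y + e₂ := by
  rw [cfMap_eq_inversion, cfMap_eq_inversion]
  exact (inversion_injective 0 one_ne_zero).eq_iff

theorem int_coords_of_mem_cfAlphabet {n : ℕ} [NeZero n] {e : EuclideanSpace ℝ (Fin n)}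
    (he : e ∈ cfAlphabet n) (i : Fin n) : ∃ m : ℤ, e i = m := by
  by_cases hi : i = 0
  · obtain ⟨k, -, hk⟩ := he.1
    exact ⟨k, by rw [hi, hk, Int.cast_natCast]⟩
  · exact he.2 i hi

theorem cfMap_images_disjoint_general {n : ℕ} [NeZero n]
    (e₁ e₂ : EuclideanSpace ℝ (Fin n)) (he₁ : e₁ ∈ cfAlphabet n) (he₂ : e₂ ∈ cfAlphabet n)
    (hne : e₁ ≠ e₂) :
    cfMap e₁ '' (Metric.ball (cfCenter n) (1/2)) ∩
      cfMap e₂ '' (Metric.ball (cfCenter n) (1/2)) = ∅ := by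
  rw [Set.eq_empty_iff_forall_notMem]
  rintro _ ⟨⟨x, hx, rfl⟩, y, hy, hyx⟩
  have hsum : y + e₂ = x + e₁ := cfMap_eq_cfMap_iff.1 hyx
  have hdiff : e₁ - e₂ = y - x := by rw [sub_eq_sub_iff_add_eq_add, add_comm, hsum]
  have hclose : dist e₁ e₂ < 1 := by
    rw [dist_eq_norm, hdiff, ← dist_eq_norm]
    simpa using dist_lt_of_mem_ball_of_mem_ball hy hx
  have hfar : 1 ≤ dist e₁ e₂ := PiLp.one_le_dist_of_int_coords
    (int_coords_of_mem_cfAlphabet he₁) (int_coords_of_mem_cfAlphabet he₂) hne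
  exact hclose.not_ge hfar

/-- For distinct `e₁, e₂ ∈ E`, the images of the interior of `X` (the open ball of radius
`1/2` centered at `v_{1/2}`) under `φ_{e₁}` and `φ_{e₂}` are disjoint. -/
theorem cfMap_images_disjoint {n : ℕ} [NeZero n] (hn : 2 ≤ n)
    (e₁ e₂ : EuclideanSpace ℝ (Fin n)) (he₁ : e₁ ∈ cfAlphabet n) (he₂ : e₂ ∈ cfAlphabet n)
    (hne : e₁ ≠ e₂) :
    cfMap e₁ '' (Metric.ball (cfCenter n) (1/2)) ∩
      cfMap e₂ '' (Metric.ball (cfCenter n) (1/2)) = ∅ :=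
  cfMap_images_disjoint_general e₁ e₂ he₁ he₂ hne
end

section
/- For every z ∈ ℂ with |z| ≤ 0.2 one has |φ₁(z)| ≤ 0.154 < 0.2, |φ₂(z)| ≤ √2/10 + 0.042 < 0.2, and |φ₃(z)| ≤ √2/10 + 0.0216 < 0.2. In particular each φ_e, e = 1,2,3, maps X into X. -/
/-! Bound each map termwise by the triangle inequality: on `‖z‖ ≤ r` the map
`z ↦ a z + c + b z²` has modulus at most `‖a‖ r + ‖c‖ + ‖b‖ r²`. The constant terms
`±0.1 - 0.1 i` have modulus `√2/10`, and `√2 < 3/2` gives the margins below `0.2`. -/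

open Complex

noncomputable def abcMap1 (z : ℂ) : ℂ := 0.25 * I * z + 0.1 + 0.1 * z ^ 2
noncomputable def abcMap2 (z : ℂ) : ℂ := 0.2 * I * z - 0.1 - 0.1 * I + 0.05 * z ^ 2
noncomputable def abcMap3 (z : ℂ) : ℂ := 0.1 * z + 0.1 - 0.1 * I + 0.04 * z ^ 2

lemma norm_linear_add_quadratic_le (a c b : ℂ) {z : ℂ} {r : ℝ} (hz : ‖z‖ ≤ r) :
    ‖a * z + c + b * z ^ 2‖ ≤ ‖a‖ * r + ‖c‖ + ‖b‖ * r ^ 2 := by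
  calc ‖a * z + c + b * z ^ 2‖ ≤ ‖a * z‖ + ‖c‖ + ‖b * z ^ 2‖ := norm_add₃_le
    _ = ‖a‖ * ‖z‖ + ‖c‖ + ‖b‖ * ‖z‖ ^ 2 := by rw [norm_mul, norm_mul, norm_pow]
    _ ≤ ‖a‖ * r + ‖c‖ + ‖b‖ * r ^ 2 := by gcongr

lemma norm_ofReal_add_mul_I_of_abs_eq {x y t : ℝ} (hx : |x| = t) (hy : |y| = t) :
    ‖(x : ℂ) + y * I‖ = √2 * t := by
  have ht : 0 ≤ t := hx ▸ abs_nonneg x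
  rw [norm_add_mul_I, ← sq_abs x, ← sq_abs y, hx, hy, ← two_mul,
    Real.sqrt_mul zero_le_two, Real.sqrt_sq ht]

lemma norm_abcMap1_le {z : ℂ} (hz : ‖z‖ ≤ 0.2) : ‖abcMap1 z‖ ≤ 0.154 := by
  have hbound := norm_linear_add_quadratic_le (0.25 * I) 0.1 0.1 hz
  norm_num at hbound
  unfold abcMap1
  linarith

lemma norm_abcMap2_le {z : ℂ} (hz : ‖z‖ ≤ 0.2) : ‖abcMap2 z‖ ≤ √2 / 10 + 0.042 := by
  have hc : ‖(-0.1 - 0.1 * I : ℂ)‖ = √2 / 10 := by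
    have h := norm_ofReal_add_mul_I_of_abs_eq (x := -0.1) (y := -0.1) (t := 0.1)
      (by norm_num [abs_of_neg]) (by norm_num [abs_of_neg])
    push_cast at h
    rw [sub_eq_add_neg, ← neg_mul, h]; ring
  have hbound := norm_linear_add_quadratic_le (0.2 * I) (-0.1 - 0.1 * I) 0.05 hz
  rw [hc] at hbound
  norm_num at hbound
  have hform : abcMap2 z = 0.2 * I * z + (-0.1 - 0.1 * I) + 0.05 * z ^ 2 := by
    unfold abcMap2; ring
  rw [hform]
  linarith

lemma norm_abcMap3_le {z : ℂ} (hz : ‖z‖ ≤ 0.2) : ‖abcMap3 z‖ ≤ √2 / 10 + 0.0216 := by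
  have hc : ‖(0.1 - 0.1 * I : ℂ)‖ = √2 / 10 := by
    have h := norm_ofReal_add_mul_I_of_abs_eq (x := 0.1) (y := -0.1) (t := 0.1)
      (by norm_num) (by norm_num [abs_of_neg])
    push_cast at h
    rw [sub_eq_add_neg, ← neg_mul, h]; ring
  have hbound := norm_linear_add_quadratic_le 0.1 (0.1 - 0.1 * I) 0.04 hz
  rw [hc] at hbound
  norm_num at hbound
  have hform : abcMap3 z = 0.1 * z + (0.1 - 0.1 * I) + 0.04 * z ^ 2 := by
    unfold abcMap3; ring
  rw [hform]
  linarith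

/-- For every `z` with `|z| ≤ 0.2`: `|φ₁(z)| ≤ 0.154 < 0.2`,
`|φ₂(z)| ≤ √2/10 + 0.042 < 0.2`, `|φ₃(z)| ≤ √2/10 + 0.0216 < 0.2`; in particular each
`φ_e` maps `X = {|z| ≤ 0.2}` into itself. -/
theorem abcMaps_mapsTo (z : ℂ) (hz : ‖z‖ ≤ 0.2) :
    (‖abcMap1 z‖ ≤ 0.154 ∧ (0.154 : ℝ) < 0.2) ∧
    (‖abcMap2 z‖ ≤ Real.sqrt 2 / 10 + 0.042 ∧ Real.sqrt 2 / 10 + 0.042 < 0.2) ∧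
    (‖abcMap3 z‖ ≤ Real.sqrt 2 / 10 + 0.0216 ∧ Real.sqrt 2 / 10 + 0.0216 < 0.2) ∧
    (‖abcMap1 z‖ ≤ 0.2 ∧ ‖abcMap2 z‖ ≤ 0.2 ∧
      ‖abcMap3 z‖ ≤ 0.2) := by
  have h1 := norm_abcMap1_le hz
  have h2 := norm_abcMap2_le hz
  have h3 := norm_abcMap3_le hz
  have hsqrt := Real.sqrt_two_lt_three_halves
  refine ⟨⟨h1, by norm_num⟩, ⟨h2, by linarith⟩, ⟨h3, by linarith⟩, by linarith, by linarith,
    by linarith⟩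
end

section
/- Each of the maps φ₁, φ₂, φ₃ is injective on X. Specifically, for all z ∈ X one has Re(−i φ₁′(z)) ≥ 0.21 > 0, Re(−i φ₂′(z)) ≥ 0.18 > 0, and Re(φ₃′(z)) ≥ 0.084 > 0, and each of these lower bounds on the real part of a fixed rotation of the derivative forces injectivity on the convex set X. -/
open Complex Metric

/-- `X = {z : |z| ≤ 0.2}`. -/
noncomputable def abcX : Set ℂ := closedBall 0 0.2

/-! Noshiro–Warschawski: if `Re (c f') > 0` on a convex set, then for distinct `a, b` in it the
real function `t ↦ Re (c f(a + t(b - a)) / (b - a))` has positive derivative on `[0, 1]`, so by the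
mean value theorem it cannot take the same value at `0` and `1`; hence `f a ≠ f b`. The three maps
are quadratic, so their rotated derivatives are affine in `z` and are bounded below on `X` using
`|Re z|, |Im z| ≤ 0.2`. -/

theorem Convex.injOn_of_re_mul_deriv_pos {f : ℂ → ℂ} {s : Set ℂ} (hs : Convex ℝ s) (c : ℂ)
    (hpos : ∀ z ∈ s, 0 < (c * deriv f z).re) : Set.InjOn f s := by
  intro a ha b hb hab
  by_contra hne
  have hba : b - a ≠ 0 := sub_ne_zero.2 (Ne.symm hne)
  have hmem : ∀ t ∈ Set.Icc (0 : ℝ) 1, a + t * (b - a) ∈ s := fun t ht => by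
    simpa only [real_smul] using hs.add_smul_sub_mem ha hb ht
  have hderiv : ∀ t ∈ Set.Icc (0 : ℝ) 1,
      HasDerivAt (fun t : ℝ => (c * f (a + t * (b - a)) / (b - a)).re)
        (c * deriv f (a + t * (b - a))).re t := by
    intro t ht
    -- `deriv` is `0` off the points of differentiability, which `hpos` rules out
    have hf : DifferentiableAt ℂ f (a + t * (b - a)) := differentiableAt_of_deriv_ne_zero fun h0 =>
      (hpos _ (hmem t ht)).ne' (by rw [h0, mul_zero, zero_re])
    have hline : HasDerivAt (fun w : ℂ => a + w * (b - a)) (b - a) t := by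
      simpa using ((hasDerivAt_id (t : ℂ)).mul_const (b - a)).const_add a
    have := ((hf.hasDerivAt.comp (t : ℂ) hline).const_mul c).div_const (b - a)
    rw [mul_div_assoc, mul_div_cancel_right₀ _ hba] at this
    exact this.real_of_complex
  obtain ⟨ξ, hξ, hslope⟩ := exists_hasDerivAt_eq_slope _ _ zero_lt_one
    (fun t ht => (hderiv t ht).continuousAt.continuousWithinAt)
    (fun t ht => hderiv t (Set.Ioo_subset_Icc_self ht))
  simp only [ofReal_one, one_mul, ofReal_zero, zero_mul, add_zero, add_sub_cancel, hab, sub_self,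
    zero_div] at hslope
  exact (hpos _ (hmem ξ (Set.Ioo_subset_Icc_self hξ))).ne' hslope

theorem deriv_quadratic {𝕜 : Type*} [NontriviallyNormedField 𝕜] (p q r x : 𝕜) :
    deriv (fun y => p * y + q + r * y ^ 2) x = p + 2 * r * x := by
  have h : HasDerivAt (fun y => p * y + q + r * y ^ 2) (p * 1 + r * ((2 : ℕ) * x ^ (2 - 1))) x :=
    (((hasDerivAt_id x).const_mul p).add_const q).add ((hasDerivAt_pow 2 x).const_mul r)
  rw [h.deriv]
  push_cast
  ring

theorem deriv_abcMap1 (z : ℂ) : deriv abcMap1 z = 0.25 * I + 0.2 * z := by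
  rw [show abcMap1 = fun y => 0.25 * I * y + 0.1 + 0.1 * y ^ 2 from rfl, deriv_quadratic]
  norm_num

theorem deriv_abcMap2 (z : ℂ) : deriv abcMap2 z = 0.2 * I + 0.1 * z := by
  rw [show abcMap2 = fun y => 0.2 * I * y + (-0.1 - 0.1 * I) + 0.05 * y ^ 2 by
    ext; unfold abcMap2; ring, deriv_quadratic]
  norm_num

theorem deriv_abcMap3 (z : ℂ) : deriv abcMap3 z = 0.1 + 0.08 * z := by
  rw [show abcMap3 = fun y => 0.1 * y + (0.1 - 0.1 * I) + 0.04 * y ^ 2 by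
    ext; unfold abcMap3; ring, deriv_quadratic]
  norm_num

theorem neg_le_re_of_mem_abcX {z : ℂ} (hz : z ∈ abcX) : -0.2 ≤ z.re :=
  (abs_le.1 ((abs_re_le_norm z).trans (mem_closedBall_zero_iff.1 hz))).1

theorem neg_le_im_of_mem_abcX {z : ℂ} (hz : z ∈ abcX) : -0.2 ≤ z.im :=
  (abs_le.1 ((abs_im_le_norm z).trans (mem_closedBall_zero_iff.1 hz))).1

theorem le_re_neg_I_mul_deriv_abcMap1 {z : ℂ} (hz : z ∈ abcX) :
    0.21 ≤ ((-I) * deriv abcMap1 z).re := by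
  have h : ((-I) * deriv abcMap1 z).re = 0.25 + 0.2 * z.im := by simp [deriv_abcMap1]
  linarith [neg_le_im_of_mem_abcX hz]

theorem le_re_neg_I_mul_deriv_abcMap2 {z : ℂ} (hz : z ∈ abcX) :
    0.18 ≤ ((-I) * deriv abcMap2 z).re := by
  have h : ((-I) * deriv abcMap2 z).re = 0.2 + 0.1 * z.im := by simp [deriv_abcMap2]
  linarith [neg_le_im_of_mem_abcX hz]

theorem le_re_deriv_abcMap3 {z : ℂ} (hz : z ∈ abcX) : 0.084 ≤ (deriv abcMap3 z).re := by
  have h : (deriv abcMap3 z).re = 0.1 + 0.08 * z.re := by simp [deriv_abcMap3]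
  linarith [neg_le_re_of_mem_abcX hz]

/-- For all `z ∈ X`: `Re(−i φ₁′(z)) ≥ 0.21 > 0`, `Re(−i φ₂′(z)) ≥ 0.18 > 0`,
`Re(φ₃′(z)) ≥ 0.084 > 0`; and each of `φ₁, φ₂, φ₃` is injective on `X`. -/
theorem abcMaps_injOn :
    (∀ z ∈ abcX, 0.21 ≤ ((-I) * deriv abcMap1 z).re) ∧ (0 : ℝ) < 0.21 ∧
    (∀ z ∈ abcX, 0.18 ≤ ((-I) * deriv abcMap2 z).re) ∧ (0 : ℝ) < 0.18 ∧
    (∀ z ∈ abcX, 0.084 ≤ (deriv abcMap3 z).re) ∧ (0 : ℝ) < 0.084 ∧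
    Set.InjOn abcMap1 abcX ∧ Set.InjOn abcMap2 abcX ∧ Set.InjOn abcMap3 abcX := by
  have hX : Convex ℝ abcX := convex_closedBall 0 0.2
  refine ⟨fun z hz => le_re_neg_I_mul_deriv_abcMap1 hz, by norm_num,
    fun z hz => le_re_neg_I_mul_deriv_abcMap2 hz, by norm_num,
    fun z hz => le_re_deriv_abcMap3 hz, by norm_num, ?_, ?_, ?_⟩
  · exact hX.injOn_of_re_mul_deriv_pos (-I) fun z hz =>
      lt_of_lt_of_le (by norm_num) (le_re_neg_I_mul_deriv_abcMap1 hz)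
  · exact hX.injOn_of_re_mul_deriv_pos (-I) fun z hz =>
      lt_of_lt_of_le (by norm_num) (le_re_neg_I_mul_deriv_abcMap2 hz)
  · exact hX.injOn_of_re_mul_deriv_pos 1 fun z hz => by
      rw [one_mul]; exact lt_of_lt_of_le (by norm_num) (le_re_deriv_abcMap3 hz)
end
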